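/- Let Q = {(x,y) ∈ ℝ² : x > 0, y > 0}, Q₁ = {u ∈ Q : slope(u) < 1}, Q₂ = {u ∈ Q : slope(u) > 1}, where slope(x,y) = y/x. Let u, v ∈ Q have distinct slopes. Then there exists A ∈ GL(2,ℤ) such that ‖Au‖ ≤ ‖u‖, ‖Av‖ ≤ ‖v‖, both Au and Av lie in Q, and either one of Au, Av lies on the diagonal {y = x}, or one lies in Q₁ and the other in Q₂. -/

import Mathlib

/-- The open first quadrant of the Euclidean plane. -/
def Qset : Set (EuclideanSpace ℝ (Fin 2)) := {u | 0 < u 0 ∧ 0 < u 1}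

/-- The slope of a vector. -/
noncomputable def slopeVec (u : EuclideanSpace ℝ (Fin 2)) : ℝ := u 1 / u 0

/-- Vectors of the first quadrant with slope less than one. -/
def Qone : Set (EuclideanSpace ℝ (Fin 2)) := {u ∈ Qset | slopeVec u < 1}

/-- Vectors of the first quadrant with slope greater than one. -/
def Qtwo : Set (EuclideanSpace ℝ (Fin 2)) := {u ∈ Qset | 1 < slopeVec u}

/-- The linear action of an integer `2×2` matrix on the Euclidean plane. -/
noncomputable def actE (A : Matrix (Fin 2) (Fin 2) ℤ) (w : EuclideanSpace ℝ (Fin 2)) :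
    EuclideanSpace ℝ (Fin 2) :=
  (show EuclideanSpace ℝ (Fin 2) from WithLp.toLp 2 (fun i => ∑ j, (A i j : ℝ) * w j))

/-! While `u` and `v` lie on the same side of the diagonal, apply the inverse Dehn twist
`D₁ (x, y) = (x - y, y)` (both below it) or `D₂ (x, y) = (x, y - x)` (both above it). Each keeps the
two vectors in the open quadrant and shortens them. The cross product `u 0 * v 1 - u 1 * v 0` is
invariant, while the product of the coordinate sums of `u` and `v` drops by at least its absolute
value at every step, so after finitely many steps the two vectors are separated by the diagonal or
one of them lies on it. -/

local notation "ℝ²" => EuclideanSpace ℝ (Fin 2)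

open Matrix

lemma actE_apply (A : Matrix (Fin 2) (Fin 2) ℤ) (w : ℝ²) (i : Fin 2) :
    actE A w i = ∑ j, (A i j : ℝ) * w j := rfl

lemma actE_one (w : ℝ²) : actE 1 w = w := by
  ext i
  simp [actE_apply, one_apply]

lemma actE_mul (A B : Matrix (Fin 2) (Fin 2) ℤ) (w : ℝ²) :
    actE (A * B) w = actE A (actE B w) := by
  ext i
  simp only [actE_apply, mul_apply, Int.cast_sum, Int.cast_mul, Finset.sum_mul, Finset.mul_sum,
    mul_assoc]
  exact Finset.sum_comm

lemma norm_le_norm_of_sq_le {w z : ℝ²} (h : w 0 ^ 2 + w 1 ^ 2 ≤ z 0 ^ 2 + z 1 ^ 2) :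
    ‖w‖ ≤ ‖z‖ := by
  simp only [EuclideanSpace.norm_eq, Fin.sum_univ_two, Real.norm_eq_abs, sq_abs]
  exact Real.sqrt_le_sqrt h

lemma mem_Qone_iff {u : ℝ²} : u ∈ Qone ↔ u ∈ Qset ∧ u 1 < u 0 :=
  and_congr_right fun hu => div_lt_one hu.1

lemma mem_Qtwo_iff {u : ℝ²} : u ∈ Qtwo ↔ u ∈ Qset ∧ u 0 < u 1 :=
  and_congr_right fun hu => one_lt_div hu.1

def cross (u v : ℝ²) : ℝ := u 0 * v 1 - u 1 * v 0

lemma cross_actE (A : Matrix (Fin 2) (Fin 2) ℤ) (u v : ℝ²) :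
    cross (actE A u) (actE A v) = A.det * cross u v := by
  simp only [cross, actE_apply, Fin.sum_univ_two, det_fin_two, Int.cast_sub, Int.cast_mul]
  ring

lemma slopeVec_ne_iff_cross_ne_zero {u v : ℝ²} (hu : u 0 ≠ 0) (hv : v 0 ≠ 0) :
    slopeVec u ≠ slopeVec v ↔ cross u v ≠ 0 := by
  rw [slopeVec, slopeVec, Ne, div_eq_div_iff hu hv, cross, sub_ne_zero, Ne, eq_comm, mul_comm (v 1)]

def potential (u v : ℝ²) : ℝ := (u 0 + u 1) * (v 0 + v 1)

lemma potential_pos {u v : ℝ²} (hu : u ∈ Qset) (hv : v ∈ Qset) : 0 < potential u v :=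
  mul_pos (add_pos hu.1 hu.2) (add_pos hv.1 hv.2)

def invDehn₁ : Matrix (Fin 2) (Fin 2) ℤ := !![1, -1; 0, 1]

def invDehn₂ : Matrix (Fin 2) (Fin 2) ℤ := !![1, 0; -1, 1]

@[simp] lemma det_invDehn₁ : invDehn₁.det = 1 := by simp [invDehn₁, det_fin_two_of]

@[simp] lemma det_invDehn₂ : invDehn₂.det = 1 := by simp [invDehn₂, det_fin_two_of]

@[simp] lemma actE_invDehn₁_zero (w : ℝ²) : actE invDehn₁ w 0 = w 0 - w 1 := by
  simp [actE_apply, invDehn₁, Fin.sum_univ_two, sub_eq_add_neg]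

@[simp] lemma actE_invDehn₁_one (w : ℝ²) : actE invDehn₁ w 1 = w 1 := by
  simp [actE_apply, invDehn₁, Fin.sum_univ_two]

@[simp] lemma actE_invDehn₂_zero (w : ℝ²) : actE invDehn₂ w 0 = w 0 := by
  simp [actE_apply, invDehn₂, Fin.sum_univ_two]

@[simp] lemma actE_invDehn₂_one (w : ℝ²) : actE invDehn₂ w 1 = w 1 - w 0 := by
  simp [actE_apply, invDehn₂, Fin.sum_univ_two, neg_add_eq_sub]

section InvDehn

variable {u v : ℝ²}

lemma actE_invDehn₁_mem_Qset (hu : u ∈ Qone) : actE invDehn₁ u ∈ Qset := by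
  obtain ⟨⟨-, hu₁⟩, hlt⟩ := mem_Qone_iff.1 hu
  exact ⟨by simpa using hlt, by simpa using hu₁⟩

lemma actE_invDehn₂_mem_Qset (hu : u ∈ Qtwo) : actE invDehn₂ u ∈ Qset := by
  obtain ⟨⟨hu₀, -⟩, hlt⟩ := mem_Qtwo_iff.1 hu
  exact ⟨by simpa using hu₀, by simpa using hlt⟩

lemma norm_actE_invDehn₁_le (hu : u ∈ Qone) : ‖actE invDehn₁ u‖ ≤ ‖u‖ := by
  obtain ⟨⟨-, hu₁⟩, hlt⟩ := mem_Qone_iff.1 hu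
  apply norm_le_norm_of_sq_le
  simp only [actE_invDehn₁_zero, actE_invDehn₁_one]
  nlinarith

lemma norm_actE_invDehn₂_le (hu : u ∈ Qtwo) : ‖actE invDehn₂ u‖ ≤ ‖u‖ := by
  obtain ⟨⟨hu₀, -⟩, hlt⟩ := mem_Qtwo_iff.1 hu
  apply norm_le_norm_of_sq_le
  simp only [actE_invDehn₂_zero, actE_invDehn₂_one]
  nlinarith

lemma abs_cross_le (hu : u ∈ Qset) (hv : v ∈ Qset) : |cross u v| ≤ u 0 * v 1 + u 1 * v 0 := by
  have := mul_pos hu.1 hv.2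
  have := mul_pos hu.2 hv.1
  exact abs_sub_le_iff.2 ⟨by linarith, by linarith⟩

lemma potential_actE_invDehn₁_add_abs_cross_le (hu : u ∈ Qset) (hv : v ∈ Qset) :
    potential (actE invDehn₁ u) (actE invDehn₁ v) + |cross u v| ≤ potential u v := by
  have := abs_cross_le hu hv
  have := mul_pos hu.2 hv.2
  simp only [potential, actE_invDehn₁_zero, actE_invDehn₁_one]
  linarith

lemma potential_actE_invDehn₂_add_abs_cross_le (hu : u ∈ Qset) (hv : v ∈ Qset) :
    potential (actE invDehn₂ u) (actE invDehn₂ v) + |cross u v| ≤ potential u v := by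
  have := abs_cross_le hu hv
  have := mul_pos hu.1 hv.1
  simp only [potential, actE_invDehn₂_zero, actE_invDehn₂_one]
  linarith

end InvDehn

def Separated (u v : ℝ²) : Prop :=
  u 1 = u 0 ∨ v 1 = v 0 ∨ (u ∈ Qone ∧ v ∈ Qtwo) ∨ (u ∈ Qtwo ∧ v ∈ Qone)

def IsSeparatingMatrix (A : Matrix (Fin 2) (Fin 2) ℤ) (u v : ℝ²) : Prop :=
  IsUnit A.det ∧ ‖actE A u‖ ≤ ‖u‖ ∧ ‖actE A v‖ ≤ ‖v‖ ∧ actE A u ∈ Qset ∧ actE A v ∈ Qset ∧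
    Separated (actE A u) (actE A v)

section Separation

variable {u v : ℝ²}

lemma isSeparatingMatrix_one (hu : u ∈ Qset) (hv : v ∈ Qset) (hsep : Separated u v) :
    IsSeparatingMatrix 1 u v := by
  simp only [IsSeparatingMatrix, actE_one, det_one, isUnit_one, le_refl, true_and]
  exact ⟨hu, hv, hsep⟩

lemma IsSeparatingMatrix.mul_right {A B : Matrix (Fin 2) (Fin 2) ℤ}
    (hA : IsSeparatingMatrix A (actE B u) (actE B v)) (hB : IsUnit B.det)
    (hu : ‖actE B u‖ ≤ ‖u‖) (hv : ‖actE B v‖ ≤ ‖v‖) : IsSeparatingMatrix (A * B) u v := by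
  obtain ⟨hdet, hnu, hnv, hmu, hmv, hsep⟩ := hA
  simp only [IsSeparatingMatrix, actE_mul, det_mul]
  exact ⟨hdet.mul hB, hnu.trans hu, hnv.trans hv, hmu, hmv, hsep⟩

lemma same_side_of_not_separated (hu : u ∈ Qset) (hv : v ∈ Qset) (hsep : ¬Separated u v) :
    (u ∈ Qone ∧ v ∈ Qone) ∨ (u ∈ Qtwo ∧ v ∈ Qtwo) := by
  simp only [Separated, mem_Qone_iff, mem_Qtwo_iff] at hsep ⊢
  rcases lt_trichotomy (u 1) (u 0) with h | h | h <;>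
    rcases lt_trichotomy (v 1) (v 0) with h' | h' | h' <;> tauto

lemma exists_reduction_step (hu : u ∈ Qset) (hv : v ∈ Qset) (hsep : ¬Separated u v) :
    ∃ B : Matrix (Fin 2) (Fin 2) ℤ, B.det = 1 ∧ actE B u ∈ Qset ∧ actE B v ∈ Qset ∧
      ‖actE B u‖ ≤ ‖u‖ ∧ ‖actE B v‖ ≤ ‖v‖ ∧
      potential (actE B u) (actE B v) + |cross u v| ≤ potential u v := by
  rcases same_side_of_not_separated hu hv hsep with ⟨hu₁, hv₁⟩ | ⟨hu₂, hv₂⟩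
  · exact ⟨invDehn₁, det_invDehn₁, actE_invDehn₁_mem_Qset hu₁, actE_invDehn₁_mem_Qset hv₁,
      norm_actE_invDehn₁_le hu₁, norm_actE_invDehn₁_le hv₁,
      potential_actE_invDehn₁_add_abs_cross_le hu hv⟩
  · exact ⟨invDehn₂, det_invDehn₂, actE_invDehn₂_mem_Qset hu₂, actE_invDehn₂_mem_Qset hv₂,
      norm_actE_invDehn₂_le hu₂, norm_actE_invDehn₂_le hv₂,
      potential_actE_invDehn₂_add_abs_cross_le hu hv⟩

lemma exists_isSeparatingMatrix_of_potential_le (n : ℕ) (hu : u ∈ Qset) (hv : v ∈ Qset)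
    (hc : cross u v ≠ 0) (hn : potential u v ≤ n * |cross u v|) :
    ∃ A, IsSeparatingMatrix A u v := by
  induction n generalizing u v with
  | zero => exact absurd hn (by simpa using potential_pos hu hv)
  | succ n ih =>
    by_cases hsep : Separated u v
    · exact ⟨1, isSeparatingMatrix_one hu hv hsep⟩
    obtain ⟨B, hB, hBu, hBv, hnu, hnv, hpot⟩ := exists_reduction_step hu hv hsep
    have hcB : cross (actE B u) (actE B v) = cross u v := by
      rw [cross_actE, hB, Int.cast_one, one_mul]
    obtain ⟨A, hA⟩ := ih hBu hBv (hcB ▸ hc) (by push_cast at hn; rw [hcB]; linarith)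
    exact ⟨A * B, hA.mul_right (by simp [hB]) hnu hnv⟩

lemma exists_isSeparatingMatrix (hu : u ∈ Qset) (hv : v ∈ Qset) (hc : cross u v ≠ 0) :
    ∃ A, IsSeparatingMatrix A u v := by
  refine exists_isSeparatingMatrix_of_potential_le ⌈potential u v / |cross u v|⌉₊ hu hv hc ?_
  exact (div_le_iff₀ (abs_pos.2 hc)).1 (Nat.le_ceil _)

end Separation

/-- Given `u, v` in the open first quadrant with distinct slopes, there is
`A ∈ GL(2,ℤ)` not increasing their Euclidean norms, keeping both in the first
quadrant, and such that either one image is on the diagonal, or one image has slope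
less than one and the other slope greater than one. -/
theorem exists_gl2_separating (u v : EuclideanSpace ℝ (Fin 2))
    (hu : u ∈ Qset) (hv : v ∈ Qset) (hs : slopeVec u ≠ slopeVec v) :
    ∃ A : Matrix (Fin 2) (Fin 2) ℤ, (A.det = 1 ∨ A.det = -1) ∧
      ‖actE A u‖ ≤ ‖u‖ ∧ ‖actE A v‖ ≤ ‖v‖ ∧
      actE A u ∈ Qset ∧ actE A v ∈ Qset ∧
      (actE A u 1 = actE A u 0 ∨ actE A v 1 = actE A v 0 ∨
        (actE A u ∈ Qone ∧ actE A v ∈ Qtwo) ∨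
        (actE A u ∈ Qtwo ∧ actE A v ∈ Qone)) := by
  have hc : cross u v ≠ 0 := (slopeVec_ne_iff_cross_ne_zero hu.1.ne' hv.1.ne').1 hs
  obtain ⟨A, hdet, hA⟩ := exists_isSeparatingMatrix hu hv hc
  exact ⟨A, Int.isUnit_iff.1 hdet, hA⟩
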